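/- arXiv:math/0407138 — 4 statements merged into one kernel-verified Lean document; each statement's English description precedes it below -/
import Mathlib

section
/- The integral of ξ(t) = (cos²t + 2t·sin t·cos t + t² − π²/4)/cos²t over [0, π/2] equals −π/2, where ξ is extended continuously to t = π/2 by ξ(π/2) = 0. -/
/-!
The numerator of `xi` has derivative `4 t cos² t ≥ 0` and vanishes at `π / 2`, so `xi ≤ 0` on
`[0, π / 2]`. On `[0, π / 2)`, `xi` is the derivative of `t + (t² - π² / 4) tan t`, which tends
to `π / 2 - π = -π / 2` at `π / 2` because `(t - π / 2) / cos t → -1`. Since a derivative of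
constant sign is integrable, the fundamental theorem of calculus gives the value `-π / 2 - 0`.
-/

open Real Set MeasureTheory

noncomputable def xi (t : ℝ) : ℝ :=
  (Real.cos t ^ 2 + 2 * t * Real.sin t * Real.cos t + t ^ 2 - Real.pi ^ 2 / 4) / Real.cos t ^ 2

noncomputable def xiNum (t : ℝ) : ℝ :=
  cos t ^ 2 + 2 * t * sin t * cos t + t ^ 2 - π ^ 2 / 4

lemma xi_eq_xiNum_div (t : ℝ) : xi t = xiNum t / cos t ^ 2 := rfl

lemma hasDerivAt_xiNum (t : ℝ) : HasDerivAt xiNum (4 * t * cos t ^ 2) t := by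
  have h : HasDerivAt xiNum _ t := ((((hasDerivAt_cos t).pow 2).add
    ((((hasDerivAt_id' t).const_mul 2).mul (hasDerivAt_sin t)).mul (hasDerivAt_cos t))).add
    (hasDerivAt_pow 2 t)).sub_const (π ^ 2 / 4)
  refine h.congr_deriv ?_
  simp only [Pi.mul_apply, Nat.cast_ofNat]
  linear_combination (-2 * t) * sin_sq_add_cos_sq t

lemma monotoneOn_xiNum : MonotoneOn xiNum (Ici 0) := by
  refine monotoneOn_of_hasDerivWithinAt_nonneg (convex_Ici 0)
    (fun t _ => (hasDerivAt_xiNum t).continuousAt.continuousWithinAt)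
    (fun t _ => (hasDerivAt_xiNum t).hasDerivWithinAt) fun t ht => ?_
  rw [interior_Ici] at ht
  have : 0 < t := ht
  positivity

lemma xiNum_pi_div_two : xiNum (π / 2) = 0 := by
  simp only [xiNum, cos_pi_div_two]
  ring

lemma xi_nonpos {t : ℝ} (h₀ : 0 ≤ t) (h₁ : t ≤ π / 2) : xi t ≤ 0 := by
  rw [xi_eq_xiNum_div]
  refine div_nonpos_of_nonpos_of_nonneg ?_ (sq_nonneg _)
  calc xiNum t ≤ xiNum (π / 2) := monotoneOn_xiNum h₀ (mem_Ici.2 (by positivity)) h₁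
    _ = 0 := xiNum_pi_div_two

lemma continuous_dslope_cos (a : ℝ) : Continuous (dslope cos a) :=
  continuousOn_univ.1 <| (continuousOn_dslope Filter.univ_mem).2
    ⟨continuous_cos.continuousOn, differentiableAt_cos⟩

lemma dslope_cos_pi_div_two_neg {t : ℝ} (h₀ : -(π / 2) < t) (h₁ : t ≤ π / 2) :
    dslope cos (π / 2) t < 0 := by
  rcases h₁.lt_or_eq with ht | rfl
  · rw [dslope_of_ne _ ht.ne, slope_def_field, cos_pi_div_two, sub_zero]
    exact div_neg_of_pos_of_neg (cos_pos_of_mem_Ioo ⟨h₀, ht⟩) (sub_neg.2 ht)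
  · rw [dslope_same, Real.deriv_cos, sin_pi_div_two]
    norm_num

/-- Away from `π / 2` this is `t + (t ^ 2 - π ^ 2 / 4) * tan t`; writing `(t - π / 2) / cos t`
as `1 / dslope cos (π / 2) t` makes it continuous at `π / 2`. -/
noncomputable def xiPrimitive (t : ℝ) : ℝ :=
  t + (t + π / 2) * sin t / dslope cos (π / 2) t

lemma xiPrimitive_eq_of_ne {t : ℝ} (h : t ≠ π / 2) :
    xiPrimitive t = t + (t ^ 2 - π ^ 2 / 4) * tan t := by
  rw [xiPrimitive, dslope_of_ne _ h, slope_def_field, cos_pi_div_two, sub_zero, tan_eq_sin_div_cos]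
  rcases eq_or_ne (cos t) 0 with hc | hc
  · simp [hc]
  · field_simp
    ring

lemma hasDerivAt_xiPrimitive {t : ℝ} (h : cos t ≠ 0) : HasDerivAt xiPrimitive (xi t) t := by
  have hne : t ≠ π / 2 := fun ht => h (ht ▸ cos_pi_div_two)
  have hd : HasDerivAt (fun s => s + (s ^ 2 - π ^ 2 / 4) * tan s) _ t :=
    (hasDerivAt_id' t).add (((hasDerivAt_pow 2 t).sub_const (π ^ 2 / 4)).mul (hasDerivAt_tan h))
  refine (hd.congr_deriv ?_).congr_of_eventuallyEq ?_
  · rw [xi, tan_eq_sin_div_cos]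
    field_simp
    ring
  · filter_upwards [eventually_ne_nhds hne] with s hs using xiPrimitive_eq_of_ne hs

lemma continuousOn_xiPrimitive : ContinuousOn xiPrimitive (Ioc (-(π / 2)) (π / 2)) :=
  (continuous_id.continuousOn).add <|
    ((continuous_id.add continuous_const).mul continuous_sin).continuousOn.div
      (continuous_dslope_cos _).continuousOn fun _ ht => (dslope_cos_pi_div_two_neg ht.1 ht.2).ne

lemma xiPrimitive_zero : xiPrimitive 0 = 0 := by
  simp [xiPrimitive]

lemma xiPrimitive_pi_div_two : xiPrimitive (π / 2) = -(π / 2) := by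
  rw [xiPrimitive, dslope_same, Real.deriv_cos, sin_pi_div_two]
  ring

lemma hasDerivAt_xiPrimitive_of_mem_Ioo {t : ℝ} (ht : t ∈ Ioo 0 (π / 2)) :
    HasDerivAt xiPrimitive (xi t) t :=
  hasDerivAt_xiPrimitive (cos_pos_of_mem_Ioo ⟨by linarith [ht.1, pi_pos], ht.2⟩).ne'

lemma continuousOn_xiPrimitive_Icc : ContinuousOn xiPrimitive (Icc 0 (π / 2)) :=
  continuousOn_xiPrimitive.mono <|
    (Icc_subset_Ioc_iff (by positivity)).2 ⟨by linarith [pi_pos], le_rfl⟩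

lemma intervalIntegrable_xi : IntervalIntegrable xi volume 0 (π / 2) := by
  have h : IntegrableOn (fun t => -xi t) (Ioc 0 (π / 2)) :=
    intervalIntegral.integrableOn_deriv_of_nonneg continuousOn_xiPrimitive_Icc.neg
      (fun _ ht => (hasDerivAt_xiPrimitive_of_mem_Ioo ht).neg)
      (fun _ ht => neg_nonneg.2 (xi_nonpos ht.1.le ht.2.le))
  exact (intervalIntegrable_iff_integrableOn_Ioc_of_le (by positivity)).2 (by simpa using h.neg)

theorem xi_integral : ∫ t in (0:ℝ)..(Real.pi / 2), xi t = -(Real.pi / 2) := by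
  rw [intervalIntegral.integral_eq_sub_of_hasDerivAt_of_le (by positivity)
    continuousOn_xiPrimitive_Icc (fun _ ht => hasDerivAt_xiPrimitive_of_mem_Ioo ht)
    intervalIntegrable_xi, xiPrimitive_pi_div_two, xiPrimitive_zero, sub_zero]
end

section
/- The function ξ(t) = (cos²t + 2t·sin t·cos t + t² − π²/4)/cos²t satisfies 1 − π²/4 ≤ ξ(t) ≤ 0 for all t in (−π/2, π/2), with the minimum ξ(0) = 1 − π²/4 attained at t = 0. -/
/-!
Both bounds come from monotonicity on `[0, π/2]`, and `ξ` is even. The upper bound says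
`g t := cos² t + 2t sin t cos t + t² ≤ π²/4`; since `g' t = 4t cos² t ≥ 0`, `g` increases
to `g (π/2) = π²/4`. Multiplying out, the lower bound says
`(π²/4) sin² t ≤ 2t sin t cos t + t²`; dividing by `sin² t`, the quotient `ψ` has
`ψ' t = 2 cos t (sin² t - t²) / sin³ t ≤ 0` because `sin t ≤ t`, so `ψ` decreases to
`ψ (π/2) = π²/4`.
-/

open Real Set

lemma xi_neg (t : ℝ) : xi (-t) = xi t := by
  simp only [xi, cos_neg, sin_neg]
  ring

lemma hasDerivAt_cos_sq_add_two_mul_sin_mul_cos_add_sq (u : ℝ) :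
    HasDerivAt (fun u => cos u ^ 2 + 2 * u * sin u * cos u + u ^ 2) (4 * u * cos u ^ 2) u := by
  refine ((((hasDerivAt_cos u).pow 2).add
    ((((hasDerivAt_id' u).const_mul 2).mul (hasDerivAt_sin u)).mul (hasDerivAt_cos u))).add
    ((hasDerivAt_id' u).pow 2)).congr_deriv ?_
  simp only [Pi.mul_apply]
  linear_combination -2 * u * sin_sq_add_cos_sq u

lemma monotoneOn_cos_sq_add_two_mul_sin_mul_cos_add_sq :
    MonotoneOn (fun u => cos u ^ 2 + 2 * u * sin u * cos u + u ^ 2) (Ici 0) :=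
  monotoneOn_of_hasDerivWithinAt_nonneg (convex_Ici 0)
    (fun u _ =>
      (hasDerivAt_cos_sq_add_two_mul_sin_mul_cos_add_sq u).continuousAt.continuousWithinAt)
    (fun u _ => (hasDerivAt_cos_sq_add_two_mul_sin_mul_cos_add_sq u).hasDerivWithinAt)
    (fun u hu => by rw [interior_Ici] at hu; have := hu.out.le; positivity)

lemma cos_sq_add_two_mul_sin_mul_cos_add_sq_le {t : ℝ} (ht : t ∈ Icc 0 (π / 2)) :
    cos t ^ 2 + 2 * t * sin t * cos t + t ^ 2 ≤ π ^ 2 / 4 := by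
  have h := monotoneOn_cos_sq_add_two_mul_sin_mul_cos_add_sq ht.1
    (show (0 : ℝ) ≤ π / 2 by positivity) ht.2
  simp only [cos_pi_div_two, sin_pi_div_two] at h
  linarith

lemma hasDerivAt_two_mul_sin_mul_cos_add_sq_div_sin_sq {u : ℝ} (hu : sin u ≠ 0) :
    HasDerivAt (fun u => (2 * u * sin u * cos u + u ^ 2) / sin u ^ 2)
      (2 * cos u * (sin u ^ 2 - u ^ 2) / sin u ^ 3) u := by
  refine (((((hasDerivAt_id' u).const_mul 2).mul (hasDerivAt_sin u)).mul
    (hasDerivAt_cos u)).add ((hasDerivAt_id' u).pow 2) |>.div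
    ((hasDerivAt_sin u).pow 2) (pow_ne_zero 2 hu)).congr_deriv ?_
  simp only [Pi.mul_apply, Pi.add_apply, Pi.pow_apply]
  field_simp
  linear_combination -2 * u * sin u ^ 2 * sin_sq_add_cos_sq u

lemma antitoneOn_two_mul_sin_mul_cos_add_sq_div_sin_sq :
    AntitoneOn (fun u => (2 * u * sin u * cos u + u ^ 2) / sin u ^ 2) (Ioc 0 (π / 2)) := by
  have hsin : ∀ u ∈ Ioc 0 (π / 2), 0 < sin u := fun u hu =>
    sin_pos_of_pos_of_lt_pi hu.1 (by linarith [hu.2, pi_pos])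
  refine antitoneOn_of_hasDerivWithinAt_nonpos (convex_Ioc 0 (π / 2))
    (fun u hu => (hasDerivAt_two_mul_sin_mul_cos_add_sq_div_sin_sq
      (hsin u hu).ne').continuousAt.continuousWithinAt)
    (fun u hu => (hasDerivAt_two_mul_sin_mul_cos_add_sq_div_sin_sq
      (hsin u (interior_subset hu)).ne').hasDerivWithinAt) fun u hu => ?_
  rw [interior_Ioc] at hu
  have hs := hsin u (Ioo_subset_Ioc_self hu)
  have hc : 0 < cos u := cos_pos_of_mem_Ioo ⟨by linarith [hu.1, pi_pos], hu.2⟩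
  have hsu : sin u ^ 2 ≤ u ^ 2 := pow_le_pow_left₀ hs.le (sin_le hu.1.le) 2
  apply div_nonpos_of_nonpos_of_nonneg _ (by positivity)
  nlinarith

lemma pi_sq_div_four_mul_sin_sq_le {t : ℝ} (ht : t ∈ Icc 0 (π / 2)) :
    π ^ 2 / 4 * sin t ^ 2 ≤ 2 * t * sin t * cos t + t ^ 2 := by
  rcases ht.1.eq_or_lt with rfl | ht0
  · simp
  have hs : 0 < sin t := sin_pos_of_pos_of_lt_pi ht0 (by linarith [ht.2, pi_pos])
  have h := antitoneOn_two_mul_sin_mul_cos_add_sq_div_sin_sq ⟨ht0, ht.2⟩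
    ⟨by positivity, le_rfl⟩ ht.2
  simp only [cos_pi_div_two, sin_pi_div_two] at h
  rw [le_div_iff₀ (by positivity)] at h
  linarith

theorem xi_bounds :
    (∀ t ∈ Ioo (-(Real.pi / 2)) (Real.pi / 2),
      1 - Real.pi ^ 2 / 4 ≤ xi t ∧ xi t ≤ 0) ∧
    xi 0 = 1 - Real.pi ^ 2 / 4 := by
  refine ⟨fun t ht => ?_, by simp [xi]⟩
  have hxi : xi t = xi |t| := by rcases abs_choice t with h | h <;> simp [h, xi_neg]
  have habs : |t| ∈ Icc 0 (π / 2) := ⟨abs_nonneg t, (abs_lt.2 ht).le⟩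
  have hc : 0 < cos |t| ^ 2 := by
    have := cos_pos_of_mem_Ioo ⟨by linarith [abs_nonneg t, pi_pos], abs_lt.2 ht⟩
    positivity
  have hupper := cos_sq_add_two_mul_sin_mul_cos_add_sq_le habs
  have hlower := pi_sq_div_four_mul_sin_sq_le habs
  rw [hxi, xi, le_div_iff₀ hc, div_nonpos_iff]
  exact ⟨by linear_combination hlower - π ^ 2 / 4 * sin_sq_add_cos_sq |t|,
    .inr ⟨by linarith, hc.le⟩⟩
end

section
/- For ξ(t) = (cos²t + 2t·sin t·cos t + t² − π²/4)/cos²t, one has ξ'(t) < 0 for t in (−π/2, 0) and ξ'(t) > 0 for t in (0, π/2), i.e., t·ξ'(t) > 0 for nonzero t in (−π/2, π/2). -/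
open Real Set

/-! Up to the positive factor `2 / cos³ t`, `ξ'(t)` is the odd function
`g t = 2t cos t + sin t (cos² t + t² - π²/4)`, so it suffices that `g > 0` on `(0, π/2)`.
With `t = π/2 - u`, `g = (π - 2u)(sin u - u cos u) - cos u (u² - sin² u)`. Since
`π - 2u = 2t ≥ 2 sin t = 2 cos u` and `sin u > u cos u` (i.e. `tan u > u`), we get
`g ≥ cos u (2 (sin u - u cos u) - (u² - sin² u))`, and the last factor, in which `π` no longer
appears, vanishes at `0` and is strictly increasing on `[0, π/2]`. -/

lemma mul_cos_lt_sin {x : ℝ} (h0 : 0 < x) (hx : x < π / 2) : x * cos x < sin x := by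
  have hcos : 0 < cos x := cos_pos_of_mem_Ioo ⟨by linarith, hx⟩
  calc x * cos x < tan x * cos x := mul_lt_mul_of_pos_right (lt_tan h0 hx) hcos
    _ = sin x := by rw [tan_eq_sin_div_cos, div_mul_cancel₀ _ hcos.ne']

lemma sq_sub_sin_sq_lt_two_mul_sin_sub_mul_cos {x : ℝ} (h0 : 0 < x) (hx : x ≤ π / 2) :
    x ^ 2 - sin x ^ 2 < 2 * (sin x - x * cos x) := by
  let F : ℝ → ℝ := fun y => 2 * (sin y - y * cos y) - (y ^ 2 - sin y ^ 2)
  have hF : ∀ y, HasDerivAt F (2 * (sin y * cos y - y * (1 - sin y))) y := by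
    intro y
    refine ((((hasDerivAt_sin y).sub ((hasDerivAt_id y).mul (hasDerivAt_cos y))).const_mul 2).sub
      ((hasDerivAt_pow 2 y).sub ((hasDerivAt_sin y).pow 2))).congr_deriv ?_
    simp only [id, Nat.cast_ofNat]
    ring
  have hmono : StrictMonoOn F (Icc 0 (π / 2)) := by
    refine strictMonoOn_of_deriv_pos (convex_Icc _ _)
      (fun y _ => (hF y).continuousAt.continuousWithinAt) ?_
    intro y hy
    rw [interior_Icc] at hy
    rw [(hF y).deriv]
    have hcos : 0 < cos y := cos_pos_of_mem_Ioo ⟨by linarith [hy.1], hy.2⟩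
    have hsin : 0 < sin y := sin_pos_of_pos_of_lt_pi hy.1 (by linarith [hy.2, pi_pos])
    have hprod : 0 < (1 + sin y) * (sin y * cos y - y * (1 - sin y)) := by
      have : (1 + sin y) * (sin y * cos y - y * (1 - sin y))
          = cos y * (sin y - y * cos y) + sin y ^ 2 * cos y := by
        linear_combination y * sin_sq_add_cos_sq y
      rw [this]
      exact add_pos (mul_pos hcos (sub_pos.2 (mul_cos_lt_sin hy.1 hy.2))) (by positivity)
    exact mul_pos two_pos (pos_of_mul_pos_right hprod (by positivity))
  have := hmono ⟨le_rfl, by positivity⟩ ⟨h0.le, hx⟩ h0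
  simp only [F, sin_zero, cos_zero] at this
  linarith

lemma xi_deriv_numerator_pos {t : ℝ} (h0 : 0 < t) (ht : t < π / 2) :
    0 < 2 * t * cos t + sin t * (cos t ^ 2 + t ^ 2 - π ^ 2 / 4) := by
  obtain ⟨u, rfl⟩ : ∃ u, t = π / 2 - u := ⟨π / 2 - t, by ring⟩
  rw [sin_pi_div_two_sub, cos_pi_div_two_sub]
  have hu0 : 0 < u := by linarith
  have hcos : 0 < cos u := cos_pos_of_mem_Ioo ⟨by linarith, by linarith⟩
  have hsin_le : 2 * cos u ≤ π - 2 * u := by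
    have := sin_le h0.le
    rw [sin_pi_div_two_sub] at this
    linarith
  have hF := sq_sub_sin_sq_lt_two_mul_sin_sub_mul_cos hu0 (by linarith)
  have htan := mul_cos_lt_sin hu0 (by linarith)
  calc 0 < cos u * (2 * (sin u - u * cos u) - (u ^ 2 - sin u ^ 2)) := mul_pos hcos (by linarith)
    _ ≤ (π - 2 * u) * (sin u - u * cos u) - cos u * (u ^ 2 - sin u ^ 2) := by
      nlinarith [mul_le_mul_of_nonneg_right hsin_le (sub_pos.2 htan).le]
    _ = _ := by ring

lemma hasDerivAt_xi {t : ℝ} (hcos : cos t ≠ 0) :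
    HasDerivAt xi (2 * (2 * t * cos t + sin t * (cos t ^ 2 + t ^ 2 - π ^ 2 / 4)) / cos t ^ 3) t := by
  have hnum := ((((hasDerivAt_cos t).pow 2).add
    ((((hasDerivAt_id t).const_mul 2).mul (hasDerivAt_sin t)).mul (hasDerivAt_cos t))).add
    (hasDerivAt_pow 2 t)).sub_const (π ^ 2 / 4)
  refine (hnum.div ((hasDerivAt_cos t).pow 2) (pow_ne_zero 2 hcos)).congr_deriv ?_
  simp only [id, Nat.cast_ofNat, Pi.add_apply, Pi.mul_apply, Pi.pow_apply]
  field_simp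
  linear_combination (4 * t * cos t ^ 2) * sin_sq_add_cos_sq t

theorem xi_deriv_sign :
    ∀ t ∈ Ioo (-(Real.pi / 2)) (Real.pi / 2), t ≠ 0 → 0 < t * deriv xi t := by
  intro t ⟨ht₁, ht₂⟩ hne
  have hcos : 0 < cos t := cos_pos_of_mem_Ioo ⟨ht₁, ht₂⟩
  rw [(hasDerivAt_xi hcos.ne').deriv, mul_div_assoc', mul_left_comm]
  refine div_pos (mul_pos two_pos ?_) (pow_pos hcos 3)
  rcases hne.lt_or_gt with hneg | hpos
  · have := xi_deriv_numerator_pos (neg_pos.2 hneg) (by linarith)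
    rw [cos_neg, sin_neg] at this
    nlinarith
  · exact mul_pos hpos (xi_deriv_numerator_pos hpos ht₂)
end

section
/- The function q(t) = ξ'(t), where ξ(t) = (cos²t + 2t·sin t·cos t + t² − π²/4)/cos²t, satisfies the ODE (1/2)q''(t)·cos t − 2q'(t)·sin t − 2q(t)·cos t = −4·sin t on (−π/2, π/2). -/
open Real Set

/-!
Writing `ξ = N / cos²` with `N t = cos² t + t sin 2t + t² - π²/4`, the `sin 2t` terms cancel
in `N' = 4t cos² t`, so `ξ` solves the first-order linear equation `ξ' = 4t + 2 tan t · ξ`.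
Differentiating this equation twice and eliminating `ξ` and `ξ''` gives the third-order
equation for every solution, because `sec² = 1 + tan²`.
-/

theorem hasDerivAt_deriv_of_isOpen {𝕜 F : Type*} [NontriviallyNormedField 𝕜]
    [NormedAddCommGroup F] [NormedSpace 𝕜 F] {f g g' : 𝕜 → F} {U : Set 𝕜} (hU : IsOpen U)
    (hf : ∀ x ∈ U, HasDerivAt f (g x) x) (hg : ∀ x ∈ U, HasDerivAt g (g' x) x) :
    ∀ x ∈ U, HasDerivAt (deriv f) (g' x) x := fun x hx =>
  (hg x hx).congr_of_eventuallyEq <| by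
    filter_upwards [hU.mem_nhds hx] with y hy using (hf y hy).deriv

theorem Real.hasDerivAt_tan_one_add_tan_sq {x : ℝ} (hx : cos x ≠ 0) :
    HasDerivAt tan (1 + tan x ^ 2) x := by
  convert hasDerivAt_tan hx using 1
  rw [one_div, ← inv_one_add_tan_sq hx, inv_inv]

theorem third_order_ode_of_hasDerivAt_affine_add_two_tan_mul {y : ℝ → ℝ} {a b : ℝ}
    (hy : ∀ x, cos x ≠ 0 → HasDerivAt y (a * x + b + 2 * tan x * y x) x)
    {t : ℝ} (ht : cos t ≠ 0) :
    (1 / 2) * deriv (deriv (deriv y)) t * cos t - 2 * deriv (deriv y) t * sin t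
      - 2 * deriv y t * cos t = -a * sin t := by
  set U := {x : ℝ | cos x ≠ 0}
  have hU : IsOpen U := isOpen_ne.preimage continuous_cos
  set q₁ : ℝ → ℝ := fun x => a * x + b + 2 * tan x * y x
  set q₂ : ℝ → ℝ := fun x => a + 2 * (1 + tan x ^ 2) * y x + 2 * tan x * q₁ x
  set q₃ : ℝ → ℝ := fun x =>
    4 * tan x * (1 + tan x ^ 2) * y x + 4 * (1 + tan x ^ 2) * q₁ x + 2 * tan x * q₂ x
  have hq₁ : ∀ x ∈ U, HasDerivAt q₁ (q₂ x) x := fun x hx => by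
    have := (((hasDerivAt_id x).const_mul a).add_const b).add
      (((hasDerivAt_tan_one_add_tan_sq hx).const_mul 2).mul (hy x hx))
    exact this.congr_deriv (by simp only [q₂, q₁]; ring)
  have hq₂ : ∀ x ∈ U, HasDerivAt q₂ (q₃ x) x := fun x hx => by
    have hT := hasDerivAt_tan_one_add_tan_sq hx
    have := ((((hT.pow 2).const_add 1).const_mul 2).mul (hy x hx)).const_add a |>.add
      ((hT.const_mul 2).mul (hq₁ x hx))
    exact this.congr_deriv (by simp only [q₃, q₂, q₁, Pi.pow_apply]; ring)
  have h₂ := hasDerivAt_deriv_of_isOpen hU hy hq₁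
  have h₃ := hasDerivAt_deriv_of_isOpen hU h₂ hq₂
  rw [(hy t ht).deriv, (h₂ t ht).deriv, (h₃ t ht).deriv, ← tan_mul_cos ht]
  simp only [q₃, q₂, q₁]
  ring

theorem hasDerivAt_xi_s13 {t : ℝ} (ht : cos t ≠ 0) :
    HasDerivAt xi (4 * t + 2 * tan t * xi t) t := by
  have hN : HasDerivAt (fun t => cos t ^ 2 + 2 * t * sin t * cos t + t ^ 2 - π ^ 2 / 4)
      (4 * t * cos t ^ 2) t := by
    have := ((((hasDerivAt_cos t).pow 2).add ((((hasDerivAt_id t).const_mul 2).mul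
      (hasDerivAt_sin t)).mul (hasDerivAt_cos t))).add (hasDerivAt_pow 2 t)).sub_const (π ^ 2 / 4)
    refine this.congr_deriv ?_
    simp only [id, Pi.mul_apply]
    linear_combination (-2 * t) * sin_sq_add_cos_sq t
  refine (hN.div ((hasDerivAt_cos t).pow 2) (pow_ne_zero 2 ht)).congr_deriv ?_
  rw [xi, tan_eq_sin_div_cos, Pi.pow_apply]
  field_simp
  ring

theorem q_ode :
    ∀ t ∈ Ioo (-(Real.pi / 2)) (Real.pi / 2),
      (1 / 2) * deriv (deriv (deriv xi)) t * Real.cos t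
        - 2 * deriv (deriv xi) t * Real.sin t
        - 2 * deriv xi t * Real.cos t = -4 * Real.sin t := fun _ ht =>
  third_order_ode_of_hasDerivAt_affine_add_two_tan_mul (b := 0)
    (fun x hx => by simpa only [add_zero] using hasDerivAt_xi_s13 hx)
    (cos_pos_of_mem_Ioo ht).ne'
end
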